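/- Let σ : (ℝ²,0) → (ℝ²,0) be a C¹ diffeomorphism germ with Dσ(0) = Id, and let f, g : (ℝ²,0) → (ℝ,0) be real analytic germs, mini-regular in x, with f = g ∘ σ on a neighbourhood of the origin. Let γ : x = λ(y) and γ̃ : x = λ̃(y) be allowable real analytic demi-branches with σ(γ) = γ̃ as set germs at the origin. Then for every ξ ≥ 1: if f admits along γ the expansion (e, P) at rate ξ and g admits along γ̃ the expansion (ẽ, Q) at rate ξ, with P and Q nonzero polynomials, then e = ẽ and P = Q. -/

import Mathlib

/-!
Write `p = (λ y, y)` and `q = (λ y + z y^ξ, y)`. Since `Dσ(0) = Id`, `σ` is strictly differentiable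
at `0` with derivative `Id`, so `σ p - p = o(y)` and `σ q - σ p = (z y^ξ, 0) + o(y^ξ)`, uniformly
for `|z| ≤ R`. As `σ p` lies on `γ̃` and `λ̃` is Lipschitz (an allowable branch is `y ν(y^{1/N})`
with `ν` analytic), this gives `σ q = (λ̃ Y + w Y^ξ, Y)` with `Y ~ y` and `w - z → 0`. Hence the
expansion `(ẽ, Q)` of `g` along `γ̃` is also an expansion of `f = g ∘ σ` along `γ`, and an
expansion with nonzero polynomial is unique because `y^e = o(y^e')` when `e' < e`.
-/

open Filter Topology Polynomial

noncomputable section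

/-- A C¹ diffeomorphism germ at the origin. -/
def IsC1DiffeoGerm {E : Type*} [NormedAddCommGroup E] [NormedSpace ℝ E] (σ : E → E) : Prop :=
  σ 0 = 0 ∧ ∃ (U V : Set E) (τ : E → E), IsOpen U ∧ IsOpen V ∧ (0 : E) ∈ U ∧ (0 : E) ∈ V ∧
    Set.MapsTo σ U V ∧ Set.MapsTo τ V U ∧ (∀ x ∈ U, τ (σ x) = x) ∧ (∀ y ∈ V, σ (τ y) = y) ∧
    ContDiffOn ℝ 1 σ U ∧ ContDiffOn ℝ 1 τ V

/-- An allowable real analytic demi-branch `x = λ(y)`, `y ≥ 0`. -/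
def AllowableBranch (lam : ℝ → ℝ) : Prop :=
  ∃ (N : ℕ) (μ : ℝ → ℝ), 0 < N ∧ AnalyticAt ℝ μ 0 ∧ μ 0 = 0 ∧
    (∀ᶠ y in 𝓝[≥] (0 : ℝ), lam y = μ (y ^ ((N : ℝ)⁻¹))) ∧
    ∃ C > (0 : ℝ), ∀ᶠ y in 𝓝[≥] (0 : ℝ), |lam y| ≤ C * y

/-- The demi-branch `x = λ(y)`, `y ≥ 0`, considered as a subset of the plane. -/
def branchSet (lam : ℝ → ℝ) : Set (ℝ × ℝ) :=
  {p : ℝ × ℝ | 0 ≤ p.2 ∧ p.1 = lam p.2}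

/-- `f` admits along the demi-branch `x = λ(y)` the expansion `(e, P)` at rate `ξ`. -/
def AdmitsExpansion (f : ℝ × ℝ → ℝ) (lam : ℝ → ℝ) (ξ e : ℝ) (P : Polynomial ℝ) : Prop :=
  ∀ R > (0 : ℝ), ∀ ε > (0 : ℝ), ∀ᶠ y in 𝓝[>] (0 : ℝ), ∀ z : ℝ, |z| ≤ R →
    |f (lam y + z * y ^ ξ, y) - P.eval z * y ^ e| ≤ ε * y ^ e

/-- `f` is mini-regular in `x`: its initial homogeneous form does not vanish at `(1,0)`. -/
def MiniRegularInX (f : ℝ × ℝ → ℝ) : Prop :=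
  ∃ m : ℕ, (∀ j < m, iteratedFDeriv ℝ j f 0 = 0) ∧
    iteratedFDeriv ℝ m f 0 (fun _ => ((1 : ℝ), (0 : ℝ))) ≠ 0

open Asymptotics Metric Set
open scoped NNReal

lemma isLittleO_rpow_nhdsGT_zero {e e' : ℝ} (h : e < e') :
    (fun y : ℝ => y ^ e') =o[𝓝[>] 0] (fun y => y ^ e) := by
  have hlim : Tendsto (fun y : ℝ => y ^ (e' - e)) (𝓝[>] 0) (𝓝 0) := by
    simpa [Real.zero_rpow (sub_pos.2 h).ne'] using
      ((Real.continuousAt_rpow_const 0 _ (Or.inr (sub_pos.2 h).le)).tendsto).mono_left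
        nhdsWithin_le_nhds
  refine (((isLittleO_one_iff ℝ).2 hlim).mul_isBigO (isBigO_refl (fun y : ℝ => y ^ e) _)).congr'
    ?_ (by simp)
  filter_upwards [self_mem_nhdsWithin] with y (hy : 0 < y)
  rw [← Real.rpow_add hy, sub_add_cancel]

lemma eq_zero_of_const_mul_rpow_isLittleO {c e : ℝ}
    (h : (fun y : ℝ => c * y ^ e) =o[𝓝[>] 0] (fun y => y ^ e)) : c = 0 := by
  by_contra hc
  refine isLittleO_irrefl (Eventually.frequently ?_) ((isLittleO_const_mul_left_iff hc).1 h)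
  filter_upwards [self_mem_nhdsWithin] with y (hy : 0 < y)
  exact (Real.rpow_pos_of_pos hy e).ne'

lemma eq_zero_of_isLittleO_rpow_of_lt {φ : ℝ → ℝ} {a b e e' : ℝ} (hee : e < e')
    (ha : (fun y => φ y - a * y ^ e) =o[𝓝[>] 0] (fun y => y ^ e))
    (hb : (fun y => φ y - b * y ^ e') =o[𝓝[>] 0] (fun y => y ^ e')) : a = 0 := by
  have hlt := isLittleO_rpow_nhdsGT_zero hee
  refine eq_zero_of_const_mul_rpow_isLittleO
    (((hb.trans hlt).add ((isBigO_const_mul_self b _ _).trans_isLittleO hlt)).sub ha |>.congr_left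
      fun y => ?_)
  ring

lemma eq_of_isLittleO_rpow {φ : ℝ → ℝ} {a b e : ℝ}
    (ha : (fun y => φ y - a * y ^ e) =o[𝓝[>] 0] (fun y => y ^ e))
    (hb : (fun y => φ y - b * y ^ e) =o[𝓝[>] 0] (fun y => y ^ e)) : a = b :=
  sub_eq_zero.1 <| eq_zero_of_const_mul_rpow_isLittleO <| (hb.sub ha).congr_left fun y => by ring

lemma admitsExpansion_iff_isLittleO {f : ℝ × ℝ → ℝ} {lam : ℝ → ℝ} {ξ e : ℝ} {P : ℝ[X]} :
    AdmitsExpansion f lam ξ e P ↔ ∀ R > 0,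
      (fun x : ℝ × ℝ => f (lam x.1 + x.2 * x.1 ^ ξ, x.1) - P.eval x.2 * x.1 ^ e)
        =o[𝓝[>] 0 ×ˢ 𝓟 (closedBall 0 R)] (fun x => x.1 ^ e) := by
  simp only [AdmitsExpansion, isLittleO_iff, eventually_prod_principal_iff, mem_closedBall_zero_iff,
    Real.norm_eq_abs]
  refine forall₂_congr fun R _ => forall₂_congr fun ε _ => eventually_congr ?_
  filter_upwards [self_mem_nhdsWithin] with y (hy : 0 < y)
  rw [abs_of_pos (Real.rpow_pos_of_pos hy e)]

lemma AdmitsExpansion.isLittleO_eval {f : ℝ × ℝ → ℝ} {lam : ℝ → ℝ} {ξ e : ℝ} {P : ℝ[X]}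
    (h : AdmitsExpansion f lam ξ e P) (z : ℝ) :
    (fun y => f (lam y + z * y ^ ξ, y) - P.eval z * y ^ e) =o[𝓝[>] 0] (fun y => y ^ e) := by
  refine (admitsExpansion_iff_isLittleO.1 h (|z| + 1) (by positivity)).comp_tendsto
    (tendsto_id.prodMk (tendsto_principal.2 (Eventually.of_forall fun _ => ?_)))
  simp [Real.norm_eq_abs]

theorem AdmitsExpansion.unique {f : ℝ × ℝ → ℝ} {lam : ℝ → ℝ} {ξ e e' : ℝ} {P Q : ℝ[X]}
    (hP : P ≠ 0) (hQ : Q ≠ 0) (he : AdmitsExpansion f lam ξ e P)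
    (he' : AdmitsExpansion f lam ξ e' Q) : e = e' ∧ P = Q := by
  rcases lt_trichotomy e e' with h | rfl | h
  · exact absurd (Polynomial.funext fun z => by
      simpa using eq_zero_of_isLittleO_rpow_of_lt h (he.isLittleO_eval z) (he'.isLittleO_eval z)) hP
  · exact ⟨rfl, Polynomial.funext fun z => eq_of_isLittleO_rpow (he.isLittleO_eval z)
      (he'.isLittleO_eval z)⟩
  · exact absurd (Polynomial.funext fun z => by
      simpa using eq_zero_of_isLittleO_rpow_of_lt h (he'.isLittleO_eval z) (he.isLittleO_eval z)) hQ

lemma pow_succ_mul_sub_le_pow_succ_sub {a b : ℝ} (n : ℕ) (hb : 0 ≤ b) (hba : b ≤ a) (ha : a ≤ 1) :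
    a ^ (n + 1) * (a - b) ≤ a ^ (n + 1) - b ^ (n + 1) := by
  have hbn : b ^ n ≤ a ^ n := pow_le_pow_left₀ hb hba n
  have han : a ^ n * a ≤ a ^ n := mul_le_of_le_one_right (pow_nonneg (hb.trans hba) n) ha
  rw [pow_succ, pow_succ b]
  nlinarith [mul_le_mul_of_nonneg_right hbn hb, mul_le_mul_of_nonneg_right han (sub_nonneg.2 hba)]

lemma AnalyticAt.natCast_le_analyticOrderAt_of_isBigO {μ : ℝ → ℝ} {N : ℕ}
    (hμ : AnalyticAt ℝ μ 0) (h : μ =O[𝓝[>] 0] (fun s => s ^ N)) :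
    (N : ℕ∞) ≤ analyticOrderAt μ 0 := by
  by_contra! hlt
  obtain ⟨n, hn⟩ := ENat.ne_top_iff_exists.1 (hlt.trans_le le_top).ne
  rw [← hn, Nat.cast_lt] at hlt
  obtain ⟨g, hg, hg0, hμg⟩ := hμ.analyticOrderAt_eq_natCast.1 hn.symm
  have hμg' : ∀ᶠ s in 𝓝[>] (0 : ℝ), μ s = s ^ n * g s := by
    filter_upwards [nhdsWithin_le_nhds hμg] with s hs
    simpa using hs
  have hgO : g =O[𝓝[>] 0] (fun s => s ^ (N - n)) := by
    refine ((isBigO_refl (fun s : ℝ => (s ^ n)⁻¹) _).mul h).congr' ?_ ?_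
    · filter_upwards [hμg', self_mem_nhdsWithin] with s hs (hs0 : 0 < s)
      rw [hs, inv_mul_cancel_left₀ (pow_pos hs0 n).ne']
    · filter_upwards [self_mem_nhdsWithin] with s (hs0 : 0 < s)
      rw [pow_sub₀ _ hs0.ne' hlt.le, mul_comm]
  have hg_lim : Tendsto g (𝓝[>] 0) (𝓝 0) := hgO.trans_tendsto <| by
    simpa [zero_pow (Nat.sub_ne_zero_of_lt hlt)] using
      ((continuous_pow (N - n)).tendsto (0 : ℝ)).mono_left nhdsWithin_le_nhds
  exact hg0 (tendsto_nhds_unique (hg.continuousAt.tendsto.mono_left nhdsWithin_le_nhds) hg_lim)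

lemma abs_pow_mul_sub_pow_mul_le {ν : ℝ → ℝ} {K : ℝ≥0} {B s₁ s₂ : ℝ} (n : ℕ) (hs₂ : 0 ≤ s₂)
    (hs : s₂ ≤ s₁) (hs₁ : s₁ ≤ 1) (hB : |ν s₂| ≤ B) (hK : |ν s₁ - ν s₂| ≤ K * (s₁ - s₂)) :
    |s₁ ^ (n + 1) * ν s₁ - s₂ ^ (n + 1) * ν s₂| ≤ (B + K) * (s₁ ^ (n + 1) - s₂ ^ (n + 1)) := by
  have hpow := pow_succ_mul_sub_le_pow_succ_sub n hs₂ hs hs₁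
  have hpos : 0 ≤ s₁ ^ (n + 1) := pow_nonneg (hs₂.trans hs) _
  have hdiff : 0 ≤ s₁ ^ (n + 1) - s₂ ^ (n + 1) := (mul_nonneg hpos (sub_nonneg.2 hs)).trans hpow
  calc |s₁ ^ (n + 1) * ν s₁ - s₂ ^ (n + 1) * ν s₂|
      = |(s₁ ^ (n + 1) - s₂ ^ (n + 1)) * ν s₂ + s₁ ^ (n + 1) * (ν s₁ - ν s₂)| := by ring_nf
    _ ≤ (s₁ ^ (n + 1) - s₂ ^ (n + 1)) * B + s₁ ^ (n + 1) * (K * (s₁ - s₂)) := by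
      refine (abs_add_le _ _).trans (add_le_add ?_ ?_) <;>
        rw [abs_mul, abs_of_nonneg (by assumption)] <;> gcongr
    _ ≤ (B + K) * (s₁ ^ (n + 1) - s₂ ^ (n + 1)) := by nlinarith [K.coe_nonneg]

lemma lipschitzOnWith_of_comp_pow_eq_pow_mul {lam ν : ℝ → ℝ} {n : ℕ} {r B : ℝ} {K : ℝ≥0}
    (hr₀ : 0 ≤ r) (hr : r ≤ 1) (hlam : ∀ s ∈ Icc 0 r, lam (s ^ (n + 1)) = s ^ (n + 1) * ν s)
    (hB : ∀ s ∈ Icc 0 r, |ν s| ≤ B) (hK : LipschitzOnWith K ν (Icc 0 r)) :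
    LipschitzOnWith (B + K).toNNReal lam (Icc 0 (r ^ (n + 1))) := by
  refine LipschitzOnWith.of_dist_le' fun y₁ hy₁ y₂ hy₂ => ?_
  wlog h : y₂ ≤ y₁ generalizing y₁ y₂
  · rw [dist_comm, dist_comm y₁]
    exact this y₂ hy₂ y₁ hy₁ (le_of_not_ge h)
  have hroot : ∀ y ∈ Icc 0 (r ^ (n + 1)), ∃ s ∈ Icc 0 r, s ^ (n + 1) = y := by
    intro y hy
    have hs := Real.rpow_inv_natCast_pow hy.1 n.succ_ne_zero
    refine ⟨_, ⟨Real.rpow_nonneg hy.1 _, ?_⟩, hs⟩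
    rw [← pow_le_pow_iff_left₀ (Real.rpow_nonneg hy.1 _) hr₀ n.succ_ne_zero, hs]
    exact hy.2
  obtain ⟨s₁, hs₁, rfl⟩ := hroot y₁ hy₁
  obtain ⟨s₂, hs₂, rfl⟩ := hroot y₂ hy₂
  have hs : s₂ ≤ s₁ := le_of_pow_le_pow_left₀ n.succ_ne_zero hs₁.1 h
  rw [Real.dist_eq, Real.dist_eq, hlam s₁ hs₁, hlam s₂ hs₂, abs_of_nonneg (sub_nonneg.2 h)]
  refine abs_pow_mul_sub_pow_mul_le n hs₂.1 hs (hs₁.2.trans hr) (hB s₂ hs₂) ?_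
  simpa [Real.dist_eq, abs_of_nonneg (sub_nonneg.2 hs)] using hK.dist_le_mul s₁ hs₁ s₂ hs₂

lemma AllowableBranch.isBigO {lam : ℝ → ℝ} (h : AllowableBranch lam) : lam =O[𝓝[>] 0] id := by
  obtain ⟨-, -, -, -, -, -, C, -, hC⟩ := h
  refine IsBigO.of_bound C ?_
  filter_upwards [nhdsWithin_mono _ Ioi_subset_Ici_self hC, self_mem_nhdsWithin]
    with y hy (hy0 : 0 < y)
  rwa [Real.norm_eq_abs, id, Real.norm_eq_abs, abs_of_pos hy0]

theorem AllowableBranch.exists_lipschitzOnWith {lam : ℝ → ℝ} (h : AllowableBranch lam) :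
    ∃ K : ℝ≥0, ∃ ε > 0, LipschitzOnWith K lam (Icc 0 ε) := by
  obtain ⟨N, μ, hN, hμ, -, heq, C, -, hC⟩ := h
  obtain ⟨n, rfl⟩ := Nat.exists_eq_add_one_of_ne_zero hN.ne'
  have hpow : Tendsto (fun s : ℝ => s ^ (n + 1)) (𝓝[≥] 0) (𝓝[≥] 0) :=
    tendsto_nhdsWithin_of_tendsto_nhds_of_eventually_within _
      (by simpa using ((continuous_pow (n + 1)).tendsto (0 : ℝ)).mono_left nhdsWithin_le_nhds)
      (eventually_nhdsWithin_of_forall fun s (hs : 0 ≤ s) => pow_nonneg hs _)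
  have hlamμ : ∀ᶠ s in 𝓝[≥] (0 : ℝ), lam (s ^ (n + 1)) = μ s := by
    filter_upwards [hpow.eventually heq, self_mem_nhdsWithin] with s hs (hs0 : 0 ≤ s)
    rwa [Real.pow_rpow_inv_natCast hs0 n.succ_ne_zero] at hs
  have hμO : μ =O[𝓝[>] 0] (fun s => s ^ (n + 1)) := by
    refine IsBigO.of_bound C ?_
    filter_upwards [nhdsWithin_mono _ Ioi_subset_Ici_self (hlamμ.and (hpow.eventually hC)),
      self_mem_nhdsWithin] with s ⟨hs, hsC⟩ (hs0 : 0 < s)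
    rwa [← hs, Real.norm_eq_abs, Real.norm_eq_abs, abs_of_pos (pow_pos hs0 _)]
  obtain ⟨ν, hν, hμν⟩ :=
    (natCast_le_analyticOrderAt hμ).1 (hμ.natCast_le_analyticOrderAt_of_isBigO hμO)
  obtain ⟨K, t, ht, hK⟩ := (hν.contDiffAt (n := 1)).exists_lipschitzOnWith
  have hνB : ∀ᶠ s in 𝓝 (0 : ℝ), |ν s| ≤ |ν 0| + 1 :=
    hν.continuousAt.tendsto.abs.eventually (ge_mem_nhds (lt_add_one _))
  obtain ⟨r, hr, hsub⟩ := mem_nhdsGE_iff_exists_Icc_subset.1 <| hlamμ.and <| nhdsWithin_le_nhds <|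
    hμν.and <| hνB.and <| (show ∀ᶠ s in 𝓝 (0 : ℝ), s ∈ t from ht).and (gt_mem_nhds one_pos)
  have hr1 : r ≤ 1 := (hsub ⟨hr.le, le_rfl⟩).2.2.2.2.le
  refine ⟨_, r ^ (n + 1), pow_pos hr _, lipschitzOnWith_of_comp_pow_eq_pow_mul hr.le hr1
    (fun s hs => ?_) (fun s hs => (hsub hs).2.2.1) (hK.mono fun s hs => (hsub hs).2.2.2.1)⟩
  obtain ⟨hlam, hμ, -⟩ := hsub hs
  simpa [hlam] using hμ

lemma HasStrictFDerivAt.isLittleO_comp {E F α : Type*} [NormedAddCommGroup E] [NormedSpace ℝ E]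
    [NormedAddCommGroup F] [NormedSpace ℝ F] {φ : E → F} {φ' : E →L[ℝ] F} {a : E}
    (hφ : HasStrictFDerivAt φ φ' a) {l : Filter α} {u v : α → E} (hu : Tendsto u l (𝓝 a))
    (hv : Tendsto v l (𝓝 a)) :
    (fun x => φ (u x) - φ (v x) - φ' (u x - v x)) =o[l] (fun x => u x - v x) :=
  hφ.isLittleO.comp_tendsto (hu.prodMk_nhds hv)

lemma LipschitzOnWith.isBigO_comp_sub {α E F : Type*} [SeminormedAddCommGroup E]
    [SeminormedAddCommGroup F] {φ : E → F} {K : ℝ≥0} {s : Set E}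
    (hφ : LipschitzOnWith K φ s) {l : Filter α} {u v : α → E} (hu : ∀ᶠ x in l, u x ∈ s)
    (hv : ∀ᶠ x in l, v x ∈ s) : (fun x => φ (u x) - φ (v x)) =O[l] (fun x => u x - v x) := by
  refine IsBigO.of_bound K ?_
  filter_upwards [hu, hv] with x hux hvx
  simpa [dist_eq_norm] using hφ.dist_le_mul _ hux _ hvx

lemma Asymptotics.IsEquivalent.rpow_of_eventually_nonneg {α : Type*} {l : Filter α} {u v : α → ℝ}
    (h : u ~[l] v) (hv : ∀ᶠ x in l, 0 ≤ v x) (r : ℝ) :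
    (fun x => u x ^ r) ~[l] (fun x => v x ^ r) := by
  have habs : v =ᶠ[l] fun x => |v x| := hv.mono fun x hx => (abs_of_nonneg hx).symm
  refine ((h.congr_right habs).rpow (fun x => abs_nonneg (v x)) (r := r)).congr_right ?_
  filter_upwards [habs] with x hx
  simp [← hx]

section Transfer

variable {σ : ℝ × ℝ → ℝ × ℝ} {lam lam' : ℝ → ℝ} {ξ R : ℝ} {l : Filter (ℝ × ℝ)}

lemma rpow_fst_isBigO_fst (hl : Tendsto Prod.fst l (𝓝[>] 0)) (hξ : 1 ≤ ξ) :
    (fun x : ℝ × ℝ => x.1 ^ ξ) =O[l] (fun x => x.1) := by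
  refine IsBigO.of_bound 1 ?_
  filter_upwards [hl.eventually (Ioo_mem_nhdsGT one_pos)] with x ⟨hx0, hx1⟩
  rw [one_mul, Real.norm_eq_abs, Real.norm_eq_abs, abs_of_pos hx0,
    abs_of_pos (Real.rpow_pos_of_pos hx0 _)]
  simpa using Real.rpow_le_rpow_of_exponent_ge hx0 hx1.le hξ

lemma snd_mul_rpow_fst_isBigO (hz : ∀ᶠ x in l, |x.2| ≤ R) :
    (fun x : ℝ × ℝ => x.2 * x.1 ^ ξ) =O[l] (fun x => x.1 ^ ξ) := by
  refine IsBigO.of_bound R ?_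
  filter_upwards [hz] with x hx
  rw [norm_mul, Real.norm_eq_abs]
  exact mul_le_mul_of_nonneg_right hx (norm_nonneg _)

lemma branch_isBigO_fst (hlam : lam =O[𝓝[>] 0] id) (hl : Tendsto Prod.fst l (𝓝[>] 0)) :
    (fun x : ℝ × ℝ => (lam x.1, x.1)) =O[l] (fun x => x.1) :=
  (hlam.comp_tendsto hl).prod_left (isBigO_refl _ _)

lemma chart_isBigO_fst (hlam : lam =O[𝓝[>] 0] id) (hl : Tendsto Prod.fst l (𝓝[>] 0))
    (hz : ∀ᶠ x in l, |x.2| ≤ R) (hξ : 1 ≤ ξ) :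
    (fun x : ℝ × ℝ => (lam x.1 + x.2 * x.1 ^ ξ, x.1)) =O[l] (fun x => x.1) :=
  ((hlam.comp_tendsto hl).add
    ((snd_mul_rpow_fst_isBigO hz).trans (rpow_fst_isBigO_fst hl hξ))).prod_left (isBigO_refl _ _)

lemma image_sub_image_isLittleO (hσ : HasStrictFDerivAt σ (ContinuousLinearMap.id ℝ (ℝ × ℝ)) 0)
    (hlam : lam =O[𝓝[>] 0] id) (hl : Tendsto Prod.fst l (𝓝[>] 0)) (hz : ∀ᶠ x in l, |x.2| ≤ R)
    (hξ : 1 ≤ ξ) :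
    (fun x : ℝ × ℝ => σ (lam x.1 + x.2 * x.1 ^ ξ, x.1) - σ (lam x.1, x.1) - (x.2 * x.1 ^ ξ, 0))
      =o[l] (fun x => x.1 ^ ξ) := by
  have hy : Tendsto (fun x : ℝ × ℝ => x.1) l (𝓝 0) := hl.mono_right nhdsWithin_le_nhds
  have hp := branch_isBigO_fst hlam hl
  have hdiff : ∀ x : ℝ × ℝ, (lam x.1 + x.2 * x.1 ^ ξ, x.1) - (lam x.1, x.1) = (x.2 * x.1 ^ ξ, 0) :=
    fun x => by ext <;> simp
  have h := hσ.isLittleO_comp ((chart_isBigO_fst hlam hl hz hξ).trans_tendsto hy)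
    (hp.trans_tendsto hy)
  simp only [hdiff, ContinuousLinearMap.id_apply] at h
  exact h.trans_isBigO ((snd_mul_rpow_fst_isBigO hz).prod_left (isBigO_zero _ _))

lemma snd_image_isEquivalent (hσ : HasStrictFDerivAt σ (ContinuousLinearMap.id ℝ (ℝ × ℝ)) 0)
    (hσ0 : σ 0 = 0) (hlam : lam =O[𝓝[>] 0] id) (hl : Tendsto Prod.fst l (𝓝[>] 0))
    (hz : ∀ᶠ x in l, |x.2| ≤ R) (hξ : 1 ≤ ξ) :
    (fun x : ℝ × ℝ => (σ (lam x.1 + x.2 * x.1 ^ ξ, x.1)).2) ~[l] (fun x => x.1) := by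
  have hy : Tendsto (fun x : ℝ × ℝ => x.1) l (𝓝 0) := hl.mono_right nhdsWithin_le_nhds
  have hp := branch_isBigO_fst hlam hl
  have hA := hσ.isLittleO_comp (hp.trans_tendsto hy) tendsto_const_nhds
  simp only [hσ0, sub_zero, ContinuousLinearMap.id_apply] at hA
  have hB := (image_sub_image_isLittleO hσ hlam hl hz hξ).trans_isBigO (rpow_fst_isBigO_fst hl hξ)
  refine ((isBigO_snd_prod'.trans_isLittleO hB).add
    (isBigO_snd_prod'.trans_isLittleO (hA.trans_isBigO hp))).congr_left fun x => ?_
  simp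

lemma fst_image_sub_isLittleO (hσ : HasStrictFDerivAt σ (ContinuousLinearMap.id ℝ (ℝ × ℝ)) 0)
    (hσ0 : σ 0 = 0) (hlam : lam =O[𝓝[>] 0] id)
    (hbranch : ∀ᶠ y in 𝓝[>] 0, σ (lam y, y) ∈ branchSet lam') {K : ℝ≥0} {ε : ℝ} (hε : 0 < ε)
    (hlip : LipschitzOnWith K lam' (Icc 0 ε)) (hl : Tendsto Prod.fst l (𝓝[>] 0))
    (hz : ∀ᶠ x in l, |x.2| ≤ R) (hξ : 1 ≤ ξ) :
    (fun x : ℝ × ℝ => (σ (lam x.1 + x.2 * x.1 ^ ξ, x.1)).1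
      - lam' (σ (lam x.1 + x.2 * x.1 ^ ξ, x.1)).2 - x.2 * (σ (lam x.1 + x.2 * x.1 ^ ξ, x.1)).2 ^ ξ)
      =o[l] (fun x => x.1 ^ ξ) := by
  have hy : Tendsto (fun x : ℝ × ℝ => x.1) l (𝓝 0) := hl.mono_right nhdsWithin_le_nhds
  have hB := image_sub_image_isLittleO hσ hlam hl hz hξ
  have hY := snd_image_isEquivalent hσ hσ0 hlam hl hz hξ
  have hy0 : ∀ᶠ x in l, 0 < x.1 := hl.eventually self_mem_nhdsWithin
  have hYpos := hY.eventually_pos hy0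
  have hbr : ∀ᶠ x : ℝ × ℝ in l, σ (lam x.1, x.1) ∈ branchSet lam' := hl.eventually hbranch
  have hp0 : Tendsto (fun x : ℝ × ℝ => σ (lam x.1, x.1)) l (𝓝 0) := by
    rw [← hσ0]
    exact hσ.continuousAt.tendsto.comp ((branch_isBigO_fst hlam hl).trans_tendsto hy)
  have hIcc : ∀ u : ℝ × ℝ → ℝ, Tendsto u l (𝓝 0) → (∀ᶠ x in l, 0 ≤ u x) →
      ∀ᶠ x in l, u x ∈ Icc 0 ε := fun u hu h0 => h0.and (hu.eventually (ge_mem_nhds hε))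
  have hlipO := hlip.isBigO_comp_sub (hIcc _ hp0.snd_nhds (hbr.mono fun _ h => h.1))
    (hIcc _ (hY.symm.tendsto_nhds hy) (hYpos.mono fun _ h => h.le))
  have hlipo := hlipO.trans_isLittleO <| (isBigO_snd_prod'.trans_isLittleO hB).neg_left.congr_left
    fun x => by simp
  have hzO : (fun x : ℝ × ℝ => x.2) =O[l] (fun _ => (1 : ℝ)) :=
    IsBigO.of_bound R (by simpa using hz)
  have hshift := hzO.mul_isLittleO
    (hY.rpow_of_eventually_nonneg (hy0.mono fun _ h => h.le) ξ).isLittleO.neg_left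
      |>.congr_right fun x => one_mul _
  -- with `t = (σ p).2` on `γ̃`, `X - λ' Y - z Y^ξ` is the first coordinate of
  -- `σ q - σ p - (z y^ξ, 0)`, plus `λ' t - λ' Y`, plus `z (y^ξ - Y^ξ)`
  refine (((isBigO_fst_prod'.trans_isLittleO hB).add hlipo).add hshift).congr' ?_ EventuallyEq.rfl
  filter_upwards [hbr] with x hx
  simp only [Prod.fst_sub, hx.2, Pi.sub_apply, neg_sub]
  ring

end Transfer

theorem AdmitsExpansion.of_comp {σ : ℝ × ℝ → ℝ × ℝ}
    (hσ : HasStrictFDerivAt σ (ContinuousLinearMap.id ℝ (ℝ × ℝ)) 0) (hσ0 : σ 0 = 0)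
    {f g : ℝ × ℝ → ℝ} (hfg : ∀ᶠ p in 𝓝 0, f p = g (σ p)) {lam lam' : ℝ → ℝ}
    (hlam : lam =O[𝓝[>] 0] id) (hbranch : ∀ᶠ y in 𝓝[>] 0, σ (lam y, y) ∈ branchSet lam')
    {K : ℝ≥0} {ε : ℝ} (hε : 0 < ε) (hlip : LipschitzOnWith K lam' (Icc 0 ε)) {ξ e : ℝ}
    (hξ : 1 ≤ ξ) {Q : ℝ[X]} (hg : AdmitsExpansion g lam' ξ e Q) :
    AdmitsExpansion f lam ξ e Q := by
  rw [admitsExpansion_iff_isLittleO] at hg ⊢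
  intro R hR
  set l := 𝓝[>] (0 : ℝ) ×ˢ 𝓟 (closedBall (0 : ℝ) R)
  have hl : Tendsto Prod.fst l (𝓝[>] 0) := tendsto_fst
  have hy : Tendsto (fun x : ℝ × ℝ => x.1) l (𝓝 0) := hl.mono_right nhdsWithin_le_nhds
  have hzR : ∀ᶠ x in l, x.2 ∈ closedBall 0 R :=
    tendsto_snd.eventually (eventually_principal.2 fun _ h => h)
  have hz : ∀ᶠ x in l, |x.2| ≤ R := hzR.mono fun x hx => by simpa using hx
  set q : ℝ × ℝ → ℝ × ℝ := fun x => σ (lam x.1 + x.2 * x.1 ^ ξ, x.1)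
  -- the coordinates of `σ q` in the chart of the expansion along `γ̃`
  set w : ℝ × ℝ → ℝ := fun x => ((q x).1 - lam' (q x).2) / (q x).2 ^ ξ
  have hY := snd_image_isEquivalent hσ hσ0 hlam hl hz hξ
  have hy0 : ∀ᶠ x in l, 0 < x.1 := hl.eventually self_mem_nhdsWithin
  have hYpos := hY.eventually_pos hy0
  have hYe := hY.rpow_of_eventually_nonneg (hy0.mono fun _ h => h.le) e
  have hwz : Tendsto (fun x => w x - x.2) l (𝓝 0) := by
    refine ((fst_image_sub_isLittleO hσ hσ0 hlam hbranch hε hlip hl hz hξ).trans_isBigO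
      (hY.rpow_of_eventually_nonneg (hy0.mono fun _ h => h.le) ξ).isBigO_symm).tendsto_div_nhds_zero.congr' ?_
    filter_upwards [hYpos] with x hx
    have := (Real.rpow_pos_of_pos hx ξ).ne'
    simp only [w, q]
    field_simp
  have hwR : ∀ᶠ x in l, w x ∈ closedBall 0 (R + 1) := by
    filter_upwards [hz, hwz.eventually (closedBall_mem_nhds 0 one_pos)] with x hx hwx
    simp only [mem_closedBall, dist_zero_right, Real.norm_eq_abs] at hwx ⊢
    calc |w x| = |(w x - x.2) + x.2| := by ring_nf
      _ ≤ R + 1 := (abs_add_le _ _).trans (by linarith)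
  have hφ : Tendsto (fun x => ((q x).2, w x)) l (𝓝[>] 0 ×ˢ 𝓟 (closedBall 0 (R + 1))) :=
    (tendsto_nhdsWithin_iff.2 ⟨hY.symm.tendsto_nhds hy, hYpos⟩).prodMk (tendsto_principal.2 hwR)
  obtain ⟨KQ, hKQ⟩ := ((Q.contDiff_aeval 1).contDiffOn (s := closedBall (0 : ℝ) (R + 1))
    ).exists_lipschitzOnWith one_ne_zero (convex_closedBall _ _) (isCompact_closedBall _ _)
  obtain ⟨M, hM⟩ := (isCompact_closedBall (0 : ℝ) R).exists_bound_of_continuousOn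
    Q.continuous.continuousOn
  have hQw : (fun x => Q.eval (w x) - Q.eval x.2) =o[l] (fun _ => (1 : ℝ)) := by
    refine (isLittleO_one_iff ℝ).2 ((hKQ.isBigO_comp_sub hwR ?_).trans_tendsto hwz)
    exact hzR.mono fun x hx => closedBall_subset_closedBall (by linarith) hx
  have hQz : (fun x => Q.eval x.2) =O[l] (fun _ => (1 : ℝ)) :=
    IsBigO.of_bound M (hzR.mono fun x hx => by simpa using hM x.2 hx)
  have hf : ∀ᶠ x in l, f (lam x.1 + x.2 * x.1 ^ ξ, x.1) = g (q x) :=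
    ((chart_isBigO_fst hlam hl hz hξ).trans_tendsto hy).eventually hfg
  have h1 := ((hg (R + 1) (by positivity)).comp_tendsto hφ).trans_isBigO hYe.isBigO
  have h2 := (hQw.mul_isBigO hYe.isBigO).congr_right fun x => one_mul _
  have h3 := (hQz.mul_isLittleO hYe.isLittleO).congr_right fun x => one_mul _
  refine ((h1.add h2).add h3).congr' ?_ EventuallyEq.rfl
  filter_upwards [hf, hYpos] with x hfx hx
  have hqx : (lam' (q x).2 + w x * (q x).2 ^ ξ, (q x).2) = q x := by
    have := (Real.rpow_pos_of_pos hx ξ).ne'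
    ext
    · simp only [w, q]
      field_simp
      ring
    · rfl
  simp only [Function.comp_def, hqx, hfx, Pi.sub_apply, q]
  ring

lemma eventually_mem_branchSet_of_image_eq {σ : ℝ × ℝ → ℝ × ℝ} {lam lam' : ℝ → ℝ}
    (hlam : lam =O[𝓝[>] 0] id) {U : Set (ℝ × ℝ)} (hU : U ∈ 𝓝 0)
    (himage : σ '' (branchSet lam ∩ U) = branchSet lam' ∩ σ '' U) :
    ∀ᶠ y in 𝓝[>] 0, σ (lam y, y) ∈ branchSet lam' := by
  have hy : Tendsto (fun y : ℝ => y) (𝓝[>] 0) (𝓝 0) := nhdsWithin_le_nhds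
  have hp : Tendsto (fun y => (lam y, y)) (𝓝[>] 0) (𝓝 0) :=
    (hlam.trans_tendsto hy).prodMk_nhds hy
  filter_upwards [hp.eventually hU, self_mem_nhdsWithin] with y hyU (hy0 : 0 < y)
  have : σ (lam y, y) ∈ σ '' (branchSet lam ∩ U) := mem_image_of_mem σ ⟨⟨hy0.le, rfl⟩, hyU⟩
  rw [himage] at this
  exact this.1

theorem stmt7_general (σ : ℝ × ℝ → ℝ × ℝ) (hσ : IsC1DiffeoGerm σ)
    (hDσ : fderiv ℝ σ 0 = ContinuousLinearMap.id ℝ (ℝ × ℝ))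
    (f g : ℝ × ℝ → ℝ)
    (hfg : ∀ᶠ p in 𝓝 (0 : ℝ × ℝ), f p = g (σ p))
    (lam lam' : ℝ → ℝ) (hγ : AllowableBranch lam) (hγ' : AllowableBranch lam')
    (himage : ∃ U : Set (ℝ × ℝ), IsOpen U ∧ (0 : ℝ × ℝ) ∈ U ∧
      σ '' (branchSet lam ∩ U) = branchSet lam' ∩ (σ '' U)) :
    ∀ ξ : ℝ, 1 ≤ ξ → ∀ (e e' : ℝ) (P Q : Polynomial ℝ), P ≠ 0 → Q ≠ 0 →
      AdmitsExpansion f lam ξ e P → AdmitsExpansion g lam' ξ e' Q →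
      e = e' ∧ P = Q := by
  intro ξ hξ e e' P Q hP hQ hfP hgQ
  obtain ⟨hσ0, U, -, -, hU, -, h0U, -, -, -, -, -, hσC1, -⟩ := hσ
  have hstrict : HasStrictFDerivAt σ (ContinuousLinearMap.id ℝ (ℝ × ℝ)) 0 :=
    hDσ ▸ (hσC1.contDiffAt (hU.mem_nhds h0U)).hasStrictFDerivAt one_ne_zero
  obtain ⟨V, hV, h0V, hVimage⟩ := himage
  have hbranch := eventually_mem_branchSet_of_image_eq hγ.isBigO (hV.mem_nhds h0V) hVimage
  obtain ⟨K, ε, hε, hlip⟩ := hγ'.exists_lipschitzOnWith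
  exact hfP.unique hP hQ
    (.of_comp hstrict hσ0 hfg hγ.isBigO hbranch hε hlip hξ hgQ)

/-- If `σ` is a C¹ diffeomorphism germ with `Dσ(0) = Id`, `f = g ∘ σ` and `σ(γ) = γ̃` as set
germs, then the coefficient polynomials of `f` along `γ` and of `g` along `γ̃` coincide for
all `ξ ≥ 1`. -/
theorem stmt7 (σ : ℝ × ℝ → ℝ × ℝ) (hσ : IsC1DiffeoGerm σ)
    (hDσ : fderiv ℝ σ 0 = ContinuousLinearMap.id ℝ (ℝ × ℝ))
    (f g : ℝ × ℝ → ℝ) (hfa : AnalyticAt ℝ f 0) (hga : AnalyticAt ℝ g 0)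
    (hf0 : f 0 = 0) (hg0 : g 0 = 0)
    (hfm : MiniRegularInX f) (hgm : MiniRegularInX g)
    (hfg : ∀ᶠ p in 𝓝 (0 : ℝ × ℝ), f p = g (σ p))
    (lam lam' : ℝ → ℝ) (hγ : AllowableBranch lam) (hγ' : AllowableBranch lam')
    (himage : ∃ U : Set (ℝ × ℝ), IsOpen U ∧ (0 : ℝ × ℝ) ∈ U ∧
      σ '' (branchSet lam ∩ U) = branchSet lam' ∩ (σ '' U)) :
    ∀ ξ : ℝ, 1 ≤ ξ → ∀ (e e' : ℝ) (P Q : Polynomial ℝ), P ≠ 0 → Q ≠ 0 →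
      AdmitsExpansion f lam ξ e P → AdmitsExpansion g lam' ξ e' Q →
      e = e' ∧ P = Q :=
  stmt7_general σ hσ hDσ f g hfg lam lam' hγ hγ' himage
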